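/- Let P and Q be probability mass functions on a finite set Z, and let A ⊆ Z with P(A) > 0. Then -log Q(A) ≤ (D(P‖Q) + 1) / P(A), where D(P‖Q) denotes the Kullback–Leibler divergence (with the convention D(P‖Q) = ∞ if P is not absolutely continuous with respect to Q, in which case the inequality is trivial). -/

import Mathlib

noncomputable section
open scoped BigOperators
attribute [local instance] Classical.propDecidable

/-- KL divergence (base 2) between two pmfs on a finite set, with the convention that it is
`⊤` (infinity) when `P` is not absolutely continuous with respect to `Q`, and with the
convention `0 · log 0 = 0`. -/
noncomputable def klDiv2 {Z : Type*} [Fintype Z] (P Q : Z → ℝ) : EReal :=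
  if ∀ z, Q z = 0 → P z = 0 then
    (((∑ z, if P z = 0 then 0 else P z * Real.logb 2 (P z / Q z)) : ℝ) : EReal)
  else ⊤

/-! Donsker–Varadhan: for every `f`, `E_P f ≤ D(P‖Q) + log E_Q e^f`, by `log y ≤ y - 1`.
Take `f = -log Q(A)` on `A` and `0` off `A`: then `E_Q e^f = 1 + Q(Aᶜ) ≤ 2`, so
`P(A) · (-log Q(A)) ≤ D(P‖Q) + log 2` in nats, which is the claim in bits. -/

open Real Finset

theorem Finset.sum_pos_of_eq_zero_imp {ι M : Type*} [AddCommMonoid M] [PartialOrder M]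
    [IsOrderedAddMonoid M] {s : Finset ι} {a b : ι → M}
    (hb : ∀ i ∈ s, 0 ≤ b i) (hab : ∀ i ∈ s, b i = 0 → a i = 0) (ha : 0 < ∑ i ∈ s, a i) :
    0 < ∑ i ∈ s, b i := by
  refine (sum_nonneg hb).lt_of_ne fun h => ha.ne' (sum_eq_zero fun i hi => ?_)
  exact hab i hi ((sum_eq_zero_iff_of_nonneg hb).1 h.symm i hi)

section

variable {Z : Type*} [Fintype Z] (P Q : Z → ℝ)

theorem sum_mul_exp_pos (hP1 : ∑ z, P z = 1) (hQ0 : ∀ z, 0 ≤ Q z)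
    (hac : ∀ z, Q z = 0 → P z = 0) (f : Z → ℝ) :
    0 < ∑ z, Q z * exp (f z) :=
  sum_pos_of_eq_zero_imp (a := P) (fun z _ => mul_nonneg (hQ0 z) (exp_pos _).le)
    (fun z _ h => hac z ((mul_eq_zero.1 h).resolve_right (exp_pos _).ne')) (hP1 ▸ one_pos)

theorem sum_mul_le_klSum_add_log_sum_exp (hP0 : ∀ z, 0 ≤ P z) (hP1 : ∑ z, P z = 1)
    (hQ0 : ∀ z, 0 ≤ Q z) (hac : ∀ z, Q z = 0 → P z = 0) (f : Z → ℝ) :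
    ∑ z, P z * f z ≤
      (∑ z, if P z = 0 then 0 else P z * log (P z / Q z)) + log (∑ z, Q z * exp (f z)) := by
  set S := ∑ z, Q z * exp (f z)
  have hS : 0 < S := sum_mul_exp_pos P Q hP1 hQ0 hac f
  -- `log y ≤ y - 1` at `y = Q z * exp (f z) / (P z * S)`, weighted by `P z`
  have hterm : ∀ z, P z * f z - (if P z = 0 then 0 else P z * log (P z / Q z))
      - P z * log S ≤ Q z * exp (f z) / S - P z := by
    intro z
    rcases (hP0 z).eq_or_lt with hPz | hPz
    · simp only [← hPz, if_true]
      have := div_nonneg (mul_nonneg (hQ0 z) (exp_pos (f z)).le) hS.le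
      linarith
    have hQz : 0 < Q z := (hQ0 z).lt_of_ne fun h => hPz.ne' (hac z h.symm)
    have hlog := log_le_sub_one_of_pos (by positivity : 0 < Q z * exp (f z) / (P z * S))
    rw [log_div (by positivity) (by positivity), log_mul (by positivity) (by positivity),
      log_mul hPz.ne' hS.ne', log_exp] at hlog
    rw [if_neg hPz.ne', log_div hPz.ne' hQz.ne']
    have hweighted := mul_le_mul_of_nonneg_left hlog hPz.le
    have hcancel : P z * (Q z * exp (f z) / (P z * S) - 1) = Q z * exp (f z) / S - P z := by
      field_simp
    linarith
  have hsum := sum_le_sum fun z (_ : z ∈ univ) => hterm z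
  rw [sum_sub_distrib, sum_sub_distrib, sum_sub_distrib, ← sum_mul, ← sum_div, hP1,
    div_self hS.ne'] at hsum
  linarith

theorem sum_ite_mul_logb_eq_div (b : ℝ) :
    (∑ z, if P z = 0 then 0 else P z * logb b (P z / Q z)) =
      (∑ z, if P z = 0 then 0 else P z * log (P z / Q z)) / log b := by
  rw [sum_div]
  refine sum_congr rfl fun z _ => ?_
  split_ifs <;> simp [logb, mul_div_assoc]

theorem sum_mul_neg_log_le_klSum_add_log_two (hP0 : ∀ z, 0 ≤ P z) (hP1 : ∑ z, P z = 1)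
    (hQ0 : ∀ z, 0 ≤ Q z) (hQ1 : ∑ z, Q z = 1) (hac : ∀ z, Q z = 0 → P z = 0) (A : Finset Z)
    (hPA : 0 < ∑ z ∈ A, P z) :
    (∑ z ∈ A, P z) * -log (∑ z ∈ A, Q z) ≤
      (∑ z, if P z = 0 then 0 else P z * log (P z / Q z)) + log 2 := by
  set q := ∑ z ∈ A, Q z
  have hq : 0 < q := sum_pos_of_eq_zero_imp (fun z _ => hQ0 z) (fun z _ => hac z) hPA
  set f : Z → ℝ := fun z => if z ∈ A then -log q else 0
  have hPf : ∑ z, P z * f z = (∑ z ∈ A, P z) * -log q := by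
    simp only [f, mul_ite, mul_zero, sum_ite_mem, univ_inter, sum_mul]
  have hQf : ∑ z, Q z * exp (f z) ≤ 2 := by
    have hA : ∑ z ∈ A, Q z * exp (f z) = 1 := by
      rw [sum_congr rfl fun z hz => by rw [show f z = -log q from if_pos hz], ← sum_mul,
        exp_neg, exp_log hq, mul_inv_cancel₀ hq.ne']
    have hAc : ∑ z ∈ Aᶜ, Q z * exp (f z) ≤ 1 := by
      rw [sum_congr rfl fun z hz => by
        rw [show f z = 0 from if_neg (mem_compl.1 hz), exp_zero, mul_one], ← hQ1]
      exact sum_le_univ_sum_of_nonneg hQ0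
    linarith [sum_add_sum_compl A fun z => Q z * exp (f z)]
  have hdv := sum_mul_le_klSum_add_log_sum_exp P Q hP0 hP1 hQ0 hac f
  have hlog := log_le_log (sum_mul_exp_pos P Q hP1 hQ0 hac f) hQf
  linarith

end

/-- For pmfs `P, Q` on a finite set `Z` and `A ⊆ Z` with `P(A) > 0`,
`-log Q(A) ≤ (D(P‖Q) + 1) / P(A)`, stated equivalently as
`P(A) · (-log Q(A)) ≤ D(P‖Q) + 1`. -/
theorem stmt0 {Z : Type*} [Fintype Z] (P Q : Z → ℝ)
    (hP0 : ∀ z, 0 ≤ P z) (hP1 : ∑ z, P z = 1)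
    (hQ0 : ∀ z, 0 ≤ Q z) (hQ1 : ∑ z, Q z = 1)
    (A : Finset Z) (hPA : 0 < ∑ z ∈ A, P z) :
    (((∑ z ∈ A, P z) * (-Real.logb 2 (∑ z ∈ A, Q z)) : ℝ) : EReal)
      ≤ klDiv2 P Q + 1 := by
  unfold klDiv2
  split_ifs with hac
  · have hnats := sum_mul_neg_log_le_klSum_add_log_two P Q hP0 hP1 hQ0 hQ1 hac A hPA
    have hlog2 : 0 < log 2 := log_pos one_lt_two
    rw [← EReal.coe_one, ← EReal.coe_add, EReal.coe_le_coe_iff, sum_ite_mul_logb_eq_div, logb,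
      div_add_one hlog2.ne', le_div_iff₀ hlog2]
    have hcancel : (∑ z ∈ A, P z) * -(log (∑ z ∈ A, Q z) / log 2) * log 2 =
        (∑ z ∈ A, P z) * -log (∑ z ∈ A, Q z) := by
      field_simp
    linarith
  · exact le_top.trans_eq (EReal.top_add_coe 1).symm
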